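/- Let T be a tree with non-pendant vertices u and v satisfying d⁺_T(u) = d⁺_T(v), and let X and Y be trees (all pairwise disjoint, each with at least 3 vertices) with non-pendant vertices s ∈ V(X) and r ∈ V(Y). Let T₃ be obtained by identifying u with s and v with r, and T₄ by identifying u with r and v with s. Then TW(T₃) = TW(T₄), even if the numbers of pendant vertices of X and Y differ. -/

import Mathlib

open Finset SimpleGraph

noncomputable section
open scoped Classical

/-- The set of pendant (degree-1) vertices of a finite graph. -/
def pendants {V : Type*} (G : SimpleGraph V) [Fintype V] : Finset V :=
  Finset.univ.filter fun v => G.degree v = 1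

/-- `dplus G u` is the sum of the distances from `u` to the pendant vertices of `G`. -/
def dplus {V : Type*} (G : SimpleGraph V) [Fintype V] (u : V) : ℕ :=
  ∑ v ∈ pendants G, G.dist u v

/-- Terminal Wiener index: sum of distances over unordered pairs of pendant vertices
(each unordered pair is counted twice in the double sum, hence the division by 2). -/
def TW {V : Type*} (G : SimpleGraph V) [Fintype V] : ℕ :=
  (∑ u ∈ pendants G, ∑ v ∈ pendants G, G.dist u v) / 2

/-- The graph obtained from `A` and `B` by identifying `u ∈ A` with `v ∈ B`
(the merged vertex is represented by `Sum.inl u`). -/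
def glue {α β : Type*} (A : SimpleGraph α) (B : SimpleGraph β) (u : α) (v : β) :
    SimpleGraph (α ⊕ {b : β // b ≠ v}) :=
  SimpleGraph.fromRel fun x y =>
    match x, y with
    | Sum.inl a, Sum.inl a' => A.Adj a a'
    | Sum.inr b, Sum.inr b' => B.Adj b.1 b'.1
    | Sum.inl a, Sum.inr b => a = u ∧ B.Adj v b.1
    | Sum.inr _, Sum.inl _ => False

section push
variable {V W : Type*} {G : SimpleGraph V} {H : SimpleGraph W}
variable {V W : Type*} {G : SimpleGraph V} {H : SimpleGraph W}

noncomputable def pushWalk (f : V → W)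
    (hf : ∀ ⦃x y⦄, G.Adj x y → H.Adj (f x) (f y) ∨ f x = f y) :
    ∀ {x y : V}, G.Walk x y → H.Walk (f x) (f y)
  | _, _, .nil => .nil
  | x, _, .cons (v := z) h p =>
    if he : f x = f z then (pushWalk f hf p).copy he.symm rfl
    else .cons ((hf h).resolve_right he) (pushWalk f hf p)

lemma pushWalk_length_le (f : V → W)
    (hf : ∀ ⦃x y⦄, G.Adj x y → H.Adj (f x) (f y) ∨ f x = f y)
    {x y : V} (p : G.Walk x y) : (pushWalk f hf p).length ≤ p.length := by
  induction p with
  | nil => simp [pushWalk]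
  | cons h p ih =>
    rw [pushWalk]
    split
    · simpa using ih.trans (Nat.le_succ _)
    · simpa using ih

lemma dist_le_of_quasi (f : V → W)
    (hf : ∀ ⦃x y⦄, G.Adj x y → H.Adj (f x) (f y) ∨ f x = f y)
    {x y : V} (hxy : G.Reachable x y) : H.dist (f x) (f y) ≤ G.dist x y := by
  obtain ⟨p, hp⟩ := hxy.exists_walk_length_eq_dist
  calc H.dist (f x) (f y) ≤ (pushWalk f hf p).length := dist_le _
    _ ≤ p.length := pushWalk_length_le f hf p
    _ = G.dist x y := hp

lemma pushWalk_length_add {U : Type*} {K : SimpleGraph U} (f : V → W) (g : V → U)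
    (hf : ∀ ⦃x y⦄, G.Adj x y → H.Adj (f x) (f y) ∨ f x = f y)
    (hg : ∀ ⦃x y⦄, G.Adj x y → K.Adj (g x) (g y) ∨ g x = g y)
    (hex : ∀ ⦃x y⦄, G.Adj x y → (f x = f y ↔ ¬ g x = g y))
    {x y : V} (p : G.Walk x y) :
    (pushWalk f hf p).length + (pushWalk g hg p).length = p.length := by
  induction p with
  | nil => simp [pushWalk]
  | cons h p ih =>
    rw [pushWalk, pushWalk]
    rcases Classical.em (f _ = f _) with he | he
    · rw [dif_pos he, dif_neg (fun hg' => ((hex h).mp he) hg')]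
      simp only [SimpleGraph.Walk.length_copy, SimpleGraph.Walk.length_cons]
      omega
    · rw [dif_neg he, dif_pos (by by_contra hg'; exact he ((hex h).mpr hg'))]
      simp only [SimpleGraph.Walk.length_copy, SimpleGraph.Walk.length_cons]
      omega
end push


section glueLemmas
variable {α β : Type*} (A : SimpleGraph α) (B : SimpleGraph β) (u : α) (v : β)

/-- inclusion of `β` into the glued vertex set. -/
def gins (u : α) (v : β) (b : β) : α ⊕ {b : β // b ≠ v} :=
  if h : b = v then Sum.inl u else Sum.inr ⟨b, h⟩

@[simp] lemma gins_of_ne {b : β} (h : b ≠ v) : gins u v b = Sum.inr ⟨b, h⟩ := dif_neg h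
@[simp] lemma gins_v : gins u v v = Sum.inl u := dif_pos rfl

lemma gins_injective : Function.Injective (gins u v) := by
  intro b b' h
  by_cases h1 : b = v
  · by_cases h2 : b' = v
    · exact h1.trans h2.symm
    · rw [h1, gins_v, gins_of_ne _ _ h2] at h; exact absurd h (by simp)
  · by_cases h2 : b' = v
    · rw [h2, gins_of_ne _ _ h1, gins_v] at h; exact absurd h (by simp)
    · rw [gins_of_ne _ _ h1, gins_of_ne _ _ h2] at h
      simpa [Subtype.ext_iff] using h

@[simp] lemma glue_adj_inl_inl {a a' : α} :
    (glue A B u v).Adj (Sum.inl a) (Sum.inl a') ↔ A.Adj a a' := by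
  constructor
  · rintro ⟨hne, h | h⟩
    · exact h
    · exact h.symm
  · exact fun h => ⟨by simpa using h.ne, Or.inl h⟩

@[simp] lemma glue_adj_inl_inr {a : α} {b : {b : β // b ≠ v}} :
    (glue A B u v).Adj (Sum.inl a) (Sum.inr b) ↔ a = u ∧ B.Adj v b.1 := by
  constructor
  · rintro ⟨hne, h | h⟩
    · exact h
    · exact h.elim
  · exact fun h => ⟨by simp, Or.inl h⟩

@[simp] lemma glue_adj_inr_inl {a : α} {b : {b : β // b ≠ v}} :
    (glue A B u v).Adj (Sum.inr b) (Sum.inl a) ↔ a = u ∧ B.Adj v b.1 := by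
  rw [adj_comm]; exact glue_adj_inl_inr A B u v

@[simp] lemma glue_adj_inr_inr {b b' : {b : β // b ≠ v}} :
    (glue A B u v).Adj (Sum.inr b) (Sum.inr b') ↔ B.Adj b.1 b'.1 := by
  constructor
  · rintro ⟨hne, h | h⟩
    · exact h
    · exact h.symm
  · exact fun h => ⟨by simpa [Subtype.ext_iff] using h.ne, Or.inl h⟩

/-- `Sum.inl` is a graph hom from `A` to the glue. -/
lemma glue_adj_of_A {a a' : α} (h : A.Adj a a') :
    (glue A B u v).Adj (Sum.inl a) (Sum.inl a') := by simpa

lemma glue_adj_of_B {b b' : β} (h : B.Adj b b') :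
    (glue A B u v).Adj (gins u v b) (gins u v b') := by
  by_cases hb : b = v
  · by_cases hb' : b' = v
    · exact absurd (hb.trans hb'.symm) h.ne
    · rw [hb, gins_v, gins_of_ne _ _ hb']
      exact (glue_adj_inl_inr _ _ _ _).mpr ⟨rfl, by simpa using hb ▸ h⟩
  · by_cases hb' : b' = v
    · rw [hb', gins_of_ne _ _ hb, gins_v]
      exact (glue_adj_inr_inl _ _ _ _).mpr ⟨rfl, by simpa using hb' ▸ h.symm⟩
    · rw [gins_of_ne _ _ hb, gins_of_ne _ _ hb']
      exact (glue_adj_inr_inr _ _ _ _).mpr h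

/-- projection to `α`. -/
def gpa (u : α) (v : β) : α ⊕ {b : β // b ≠ v} → α := fun x =>
  match x with | Sum.inl a => a | Sum.inr _ => u

/-- projection to `β`. -/
def gpb (u : α) (v : β) : α ⊕ {b : β // b ≠ v} → β := fun x =>
  match x with | Sum.inl _ => v | Sum.inr b => b.1

lemma gpa_quasi : ∀ ⦃x y⦄, (glue A B u v).Adj x y →
    A.Adj (gpa u v x) (gpa u v y) ∨ gpa u v x = gpa u v y := by
  rintro (a | b) (a' | b') h
  · exact Or.inl (by simpa [gpa] using h)
  · exact Or.inr (by simp [gpa, ((glue_adj_inl_inr A B u v).mp h).1])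
  · exact Or.inr (by simp [gpa, ((glue_adj_inr_inl A B u v).mp h).1])
  · exact Or.inr rfl

lemma gpb_quasi : ∀ ⦃x y⦄, (glue A B u v).Adj x y →
    B.Adj (gpb u v x) (gpb u v y) ∨ gpb u v x = gpb u v y := by
  rintro (a | b) (a' | b') h
  · exact Or.inr rfl
  · exact Or.inl (by simpa [gpb] using ((glue_adj_inl_inr A B u v).mp h).2)
  · exact Or.inl (by simpa [gpb] using ((glue_adj_inr_inl A B u v).mp h).2.symm
    )
  · exact Or.inl (by simpa [gpb] using h)

lemma glue_excl : ∀ ⦃x y⦄, (glue A B u v).Adj x y →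
    (gpa u v x = gpa u v y ↔ ¬ gpb u v x = gpb u v y) := by
  rintro (a | b) (a' | b') h
  · simp only [glue_adj_inl_inl] at h
    simp [gpa, gpb, h.ne]
  · obtain ⟨rfl, h2⟩ := (glue_adj_inl_inr A B u v).mp h
    simp [gpa, gpb, Ne.symm b'.2]
  · obtain ⟨rfl, h2⟩ := (glue_adj_inr_inl A B u v).mp h
    simp [gpa, gpb, b.2]
  · simp only [glue_adj_inr_inr] at h
    simp [gpa, gpb, h.ne]

@[simp] lemma gpa_gins (b : β) : gpa u v (gins u v b) = u := by
  by_cases hb : b = v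
  · rw [hb, gins_v]; rfl
  · rw [gins_of_ne _ _ hb]; rfl

@[simp] lemma gpb_gins (b : β) : gpb u v (gins u v b) = b := by
  by_cases hb : b = v
  · rw [hb, gins_v]; exact hb.symm ▸ rfl
  · rw [gins_of_ne _ _ hb]; rfl

@[simp] lemma gpa_inl (a : α) : gpa u v (Sum.inl a) = a := rfl
@[simp] lemma gpb_inl (a : α) : gpb u v (Sum.inl a) = v := rfl

lemma glue_connected (hA : A.Connected) (hB : B.Connected) :
    (glue A B u v).Connected := by
  have key : ∀ x, (glue A B u v).Reachable (Sum.inl u) x := by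
    rintro (a | b)
    · have := hA.preconnected u a
      obtain ⟨p⟩ := this
      exact ⟨pushWalk Sum.inl (fun x y h => Or.inl (glue_adj_of_A A B u v h)) p⟩
    · have := hB.preconnected v b.1
      obtain ⟨p⟩ := this
      have := pushWalk (gins u v) (fun x y h => Or.inl (glue_adj_of_B A B u v h)) p
      rw [gins_v, gins_of_ne u v b.2] at this
      exact ⟨this⟩
  rw [connected_iff]
  exact ⟨fun x y => (key x).symm.trans (key y), ⟨Sum.inl u⟩⟩
end glueLemmas

section glueDist
variable {α β : Type*} (A : SimpleGraph α) (B : SimpleGraph β) (u : α) (v : β)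

lemma exists_adj_of_connected [Fintype α] (hA : A.Connected) (hc : 1 < Fintype.card α) (a : α) :
    0 < A.degree a := by
  rw [A.degree_pos_iff_exists_adj a]
  obtain ⟨b, hb⟩ := Fintype.exists_ne_of_one_lt_card hc a
  obtain ⟨p⟩ := hA.preconnected a b
  cases p with
  | nil => exact absurd rfl hb
  | cons h p => exact ⟨_, h⟩

lemma glue_dist_inl_inl (hA : A.Connected) (hB : B.Connected) (a a' : α) :
    (glue A B u v).dist (Sum.inl a) (Sum.inl a') = A.dist a a' := by
  apply le_antisymm
  · obtain ⟨p, hp⟩ := (hA.preconnected a a').exists_walk_length_eq_dist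
    exact le_trans (dist_le (pushWalk Sum.inl
      (fun x y h => Or.inl (glue_adj_of_A A B u v h)) p))
      ((pushWalk_length_le _ _ p).trans hp.le)
  · have := dist_le_of_quasi (gpa u v) (gpa_quasi A B u v)
      ((glue_connected A B u v hA hB).preconnected (Sum.inl a) (Sum.inl a'))
    simpa using this

lemma glue_dist_gins (hA : A.Connected) (hB : B.Connected) (b b' : β) :
    (glue A B u v).dist (gins u v b) (gins u v b') = B.dist b b' := by
  apply le_antisymm
  · obtain ⟨p, hp⟩ := (hB.preconnected b b').exists_walk_length_eq_dist
    exact le_trans (dist_le (pushWalk (gins u v)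
      (fun x y h => Or.inl (glue_adj_of_B A B u v h)) p))
      ((pushWalk_length_le _ _ p).trans hp.le)
  · have := dist_le_of_quasi (gpb u v) (gpb_quasi A B u v)
      ((glue_connected A B u v hA hB).preconnected (gins u v b) (gins u v b'))
    simpa using this

lemma glue_dist_inl_gins (hA : A.Connected) (hB : B.Connected) (a : α) (b : β) :
    (glue A B u v).dist (Sum.inl a) (gins u v b) = A.dist a u + B.dist v b := by
  apply le_antisymm
  · have htri := (glue_connected A B u v hA hB).dist_triangle
      (u := Sum.inl a) (v := Sum.inl u) (w := gins u v b)
    have h1 : (glue A B u v).dist (Sum.inl a) (Sum.inl u) = A.dist a u :=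
      glue_dist_inl_inl A B u v hA hB a u
    have h2 : (glue A B u v).dist (Sum.inl u) (gins u v b) = B.dist v b := by
      have := glue_dist_gins A B u v hA hB v b
      rwa [gins_v] at this
    omega
  · obtain ⟨p, hp⟩ := (((glue_connected A B u v hA hB).preconnected
      (Sum.inl a) (gins u v b))).exists_walk_length_eq_dist
    have hsum := pushWalk_length_add (gpa u v) (gpb u v)
      (gpa_quasi A B u v) (gpb_quasi A B u v) (glue_excl A B u v) p
    have h1 : A.dist a u ≤ (pushWalk (gpa u v) (gpa_quasi A B u v) p).length := by
      have := dist_le (pushWalk (gpa u v) (gpa_quasi A B u v) p)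
      simpa using this
    have h2 : B.dist v b ≤ (pushWalk (gpb u v) (gpb_quasi A B u v) p).length := by
      have := dist_le (pushWalk (gpb u v) (gpb_quasi A B u v) p)
      simpa using this
    omega

end glueDist

section glueDeg
variable {α β : Type*} [Fintype α] [Fintype β]
  (A : SimpleGraph α) (B : SimpleGraph β) (u : α) (v : β)

lemma glue_nbhd_inr (b : {b : β // b ≠ v}) :
    (glue A B u v).neighborFinset (Sum.inr b) = (B.neighborFinset b.1).image (gins u v) := by
  ext w
  simp only [mem_neighborFinset, mem_image]
  cases w with
  | inl a =>
    constructor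
    · intro h
      obtain ⟨ha, h2⟩ := (glue_adj_inr_inl A B u v).mp h
      exact ⟨v, h2.symm, by rw [gins_v, ha]⟩
    · rintro ⟨c, hc, hgc⟩
      by_cases hcv : c = v
      · subst hcv
        rw [gins_v] at hgc
        obtain rfl : u = a := by simpa using hgc
        exact (glue_adj_inr_inl _ _ _ _).mpr ⟨rfl, hc.symm⟩
      · rw [gins_of_ne _ _ hcv] at hgc; exact absurd hgc (by simp)
  | inr b' =>
    constructor
    · intro h
      have h2 := (glue_adj_inr_inr A B u v).mp h
      exact ⟨b'.1, h2, gins_of_ne _ _ b'.2 ▸ rfl⟩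
    · rintro ⟨c, hc, hgc⟩
      by_cases hcv : c = v
      · subst hcv; rw [gins_v] at hgc; exact absurd hgc (by simp)
      · rw [gins_of_ne _ _ hcv] at hgc
        obtain rfl : (⟨c, hcv⟩ : {b : β // b ≠ v}) = b' := by simpa using hgc
        exact (glue_adj_inr_inr A B u v).mpr hc

lemma glue_degree_inr (b : {b : β // b ≠ v}) :
    (glue A B u v).degree (Sum.inr b) = B.degree b.1 := by
  rw [degree, glue_nbhd_inr, Finset.card_image_of_injective _ (gins_injective u v), degree]

lemma glue_nbhd_inl_ne {a : α} (ha : a ≠ u) :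
    (glue A B u v).neighborFinset (Sum.inl a) = (A.neighborFinset a).image Sum.inl := by
  ext w
  simp only [mem_neighborFinset, mem_image]
  cases w with
  | inl a' =>
    simp only [glue_adj_inl_inl]
    constructor
    · exact fun h => ⟨a', h, rfl⟩
    · rintro ⟨c, hc, hgc⟩
      obtain rfl : c = a' := Sum.inl_injective hgc
      exact hc
  | inr b =>
    simp only [glue_adj_inl_inr]
    constructor
    · rintro ⟨rfl, -⟩; exact absurd rfl ha
    · rintro ⟨c, -, hgc⟩; exact absurd hgc (by simp)

lemma glue_degree_inl_ne {a : α} (ha : a ≠ u) :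
    (glue A B u v).degree (Sum.inl a) = A.degree a := by
  rw [degree, glue_nbhd_inl_ne A B u v ha,
    Finset.card_image_of_injective _ Sum.inl_injective, degree]

lemma glue_nbhd_inl_u :
    (glue A B u v).neighborFinset (Sum.inl u)
      = (A.neighborFinset u).image Sum.inl ∪ (B.neighborFinset v).image (gins u v) := by
  ext w
  simp only [mem_neighborFinset, mem_union, mem_image]
  cases w with
  | inl a' =>
    simp only [glue_adj_inl_inl]
    constructor
    · exact fun h => Or.inl ⟨a', h, rfl⟩
    · rintro (⟨c, hc, hgc⟩ | ⟨c, hc, hgc⟩)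
      · obtain rfl : c = a' := Sum.inl_injective hgc
        exact hc
      · by_cases hcv : c = v
        · subst hcv
          obtain rfl : u = a' := by simpa using hgc
          exact absurd hc (by simp)
        · rw [gins_of_ne _ _ hcv] at hgc; exact absurd hgc (by simp)
  | inr b =>
    simp only [glue_adj_inl_inr]
    constructor
    · rintro ⟨-, h2⟩
      exact Or.inr ⟨b.1, h2, gins_of_ne _ _ b.2 ▸ rfl⟩
    · rintro (⟨c, -, hgc⟩ | ⟨c, hc, hgc⟩)
      · exact absurd hgc (by simp)
      · by_cases hcv : c = v
        · subst hcv; rw [gins_v] at hgc; exact absurd hgc (by simp)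
        · rw [gins_of_ne _ _ hcv] at hgc
          obtain rfl : (⟨c, hcv⟩ : {b : β // b ≠ v}) = b := by simpa using hgc
          exact ⟨by trivial, hc⟩

lemma glue_degree_inl_u :
    (glue A B u v).degree (Sum.inl u) = A.degree u + B.degree v := by
  rw [degree, glue_nbhd_inl_u]
  rw [Finset.card_union_of_disjoint, Finset.card_image_of_injective _ Sum.inl_injective,
    Finset.card_image_of_injective _ (gins_injective u v)]
  · rfl
  · rw [Finset.disjoint_left]
    intro x hx1 hx2
    simp only [mem_image] at hx1 hx2
    obtain ⟨c, -, rfl⟩ := hx1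
    obtain ⟨c', hc', hgc'⟩ := hx2
    have hne : c' ≠ v := by
      intro h
      rw [mem_neighborFinset, h] at hc'
      exact B.irrefl hc'
    rw [gins_of_ne _ _ hne] at hgc'
    exact absurd hgc' (by simp)

lemma pendants_glue (hA : A.Connected) (hB : B.Connected)
    (hcA : 1 < Fintype.card α) (hcB : 1 < Fintype.card β)
    (hu : A.degree u ≠ 1) (hv : B.degree v ≠ 1) :
    pendants (glue A B u v)
      = (pendants A).map ⟨Sum.inl, Sum.inl_injective⟩
        ∪ (pendants B).map ⟨gins u v, gins_injective u v⟩ := by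
  have hpu : 0 < A.degree u := exists_adj_of_connected A hA hcA u
  have hpv : 0 < B.degree v := exists_adj_of_connected B hB hcB v
  ext w
  simp only [pendants, mem_filter, mem_union, Finset.mem_map, Function.Embedding.coeFn_mk,
    mem_univ, true_and]
  cases w with
  | inl a =>
    by_cases hau : a = u
    · subst hau
      rw [glue_degree_inl_u]
      constructor
      · intro h; omega
      · rintro (⟨c, hc, hgc⟩ | ⟨c, hc, hgc⟩)
        · obtain rfl : c = a := Sum.inl_injective hgc
          omega
        · by_cases hcv : c = v
          · subst hcv; omega
          · rw [gins_of_ne _ _ hcv] at hgc; exact absurd hgc (by simp)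
    · rw [glue_degree_inl_ne A B u v hau]
      constructor
      · exact fun h => Or.inl ⟨a, h, rfl⟩
      · rintro (⟨c, hc, hgc⟩ | ⟨c, hc, hgc⟩)
        · obtain rfl : c = a := Sum.inl_injective hgc
          exact hc
        · by_cases hcv : c = v
          · subst hcv; omega
          · rw [gins_of_ne _ _ hcv] at hgc; exact absurd hgc (by simp)
  | inr b =>
    rw [glue_degree_inr]
    constructor
    · intro h
      exact Or.inr ⟨b.1, h, gins_of_ne _ _ b.2 ▸ rfl⟩
    · rintro (⟨c, hc, hgc⟩ | ⟨c, hc, hgc⟩)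
      · exact absurd hgc (by simp)
      · by_cases hcv : c = v
        · subst hcv; rw [gins_v] at hgc; exact absurd hgc (by simp)
        · rw [gins_of_ne _ _ hcv] at hgc
          obtain rfl : (⟨c, hcv⟩ : {b : β // b ≠ v}) = b := by simpa using hgc
          exact hc

lemma sum_pendants_glue (hA : A.Connected) (hB : B.Connected)
    (hcA : 1 < Fintype.card α) (hcB : 1 < Fintype.card β)
    (hu : A.degree u ≠ 1) (hv : B.degree v ≠ 1)
    (f : (α ⊕ {b : β // b ≠ v}) → ℕ) :
    ∑ p ∈ pendants (glue A B u v), f p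
      = ∑ a ∈ pendants A, f (Sum.inl a) + ∑ b ∈ pendants B, f (gins u v b) := by
  rw [pendants_glue A B u v hA hB hcA hcB hu hv]
  rw [Finset.sum_union (by
    rw [Finset.disjoint_left]
    intro x hx1 hx2
    simp only [Finset.mem_map, Function.Embedding.coeFn_mk] at hx1 hx2
    obtain ⟨a, -, rfl⟩ := hx1
    obtain ⟨b, hbm, hbe⟩ := hx2
    have hbv : b ≠ v := by
      intro h
      rw [pendants, mem_filter] at hbm
      exact hv (h ▸ hbm.2)
    rw [gins_of_ne _ _ hbv] at hbe
    simp at hbe)]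
  rw [Finset.sum_map, Finset.sum_map]
  simp only [Function.Embedding.coeFn_mk]

end glueDeg

lemma S_formula {α β γ : Type*} [Fintype α] [Fintype β] [Fintype γ]
    (T : SimpleGraph α) (B : SimpleGraph β) (C : SimpleGraph γ)
    (u v : α) (s : β) (r : γ)
    (hT : T.Connected) (hB : B.Connected) (hC : C.Connected)
    (ha : 3 ≤ Fintype.card α) (hb : 3 ≤ Fintype.card β) (hc : 3 ≤ Fintype.card γ)
    (huv : u ≠ v)
    (hu : T.degree u ≠ 1) (hv : T.degree v ≠ 1)
    (hs : B.degree s ≠ 1) (hr : C.degree r ≠ 1) :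
    (∑ p ∈ pendants (glue (glue T B u s) C (Sum.inl v) r),
      ∑ q ∈ pendants (glue (glue T B u s) C (Sum.inl v) r),
        (glue (glue T B u s) C (Sum.inl v) r).dist p q)
    = (∑ p ∈ pendants T, ∑ q ∈ pendants T, T.dist p q)
      + (∑ p ∈ pendants B, ∑ q ∈ pendants B, B.dist p q)
      + (∑ p ∈ pendants C, ∑ q ∈ pendants C, C.dist p q)
      + 2 * ((pendants B).card * (∑ p ∈ pendants T, T.dist p u)
        + (pendants C).card * (∑ p ∈ pendants T, T.dist p v)
        + (pendants T).card * dplus B s + (pendants T).card * dplus C r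
        + (pendants C).card * dplus B s + (pendants B).card * dplus C r
        + (pendants B).card * (pendants C).card * T.dist v u) := by
  set G₁ := glue T B u s with hG₁def
  set G₃ := glue G₁ C (Sum.inl v) r with hG₃def
  have hG₁ : G₁.Connected := glue_connected T B u s hT hB
  have hG₃ : G₃.Connected := glue_connected G₁ C (Sum.inl v) r hG₁ hC
  have hcard1 : 1 < Fintype.card (α ⊕ {b : β // b ≠ s}) := by
    rw [Fintype.card_sum]; omega
  -- pendants of G₁ and G₃
  have hpend1 := pendants_glue T B u s hT hB (by omega) (by omega) hu hs
  have hdegv : G₁.degree (Sum.inl v) ≠ 1 := by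
    rw [hG₁def, glue_degree_inl_ne T B u s (Ne.symm huv)]; exact hv
  have hsplit : ∀ f : ((α ⊕ {b : β // b ≠ s}) ⊕ {c : γ // c ≠ r}) → ℕ,
      ∑ p ∈ pendants G₃, f p
        = ∑ a ∈ pendants T, f (Sum.inl (Sum.inl a))
          + ∑ b ∈ pendants B, f (Sum.inl (gins u s b))
          + ∑ c ∈ pendants C, f (gins (Sum.inl v) r c) := by
    intro f
    rw [hG₃def, sum_pendants_glue G₁ C (Sum.inl v) r hG₁ hC hcard1 (by omega) hdegv hr f,
      hG₁def, sum_pendants_glue T B u s hT hB (by omega) (by omega) hu hs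
        (fun x => f (Sum.inl x))]
  -- distance formulas
  have hd11 : ∀ a a', G₃.dist (Sum.inl (Sum.inl a)) (Sum.inl (Sum.inl a')) = T.dist a a' := by
    intro a a'
    rw [hG₃def, glue_dist_inl_inl G₁ C (Sum.inl v) r hG₁ hC, hG₁def,
      glue_dist_inl_inl T B u s hT hB]
  have hd12 : ∀ a b, G₃.dist (Sum.inl (Sum.inl a)) (Sum.inl (gins u s b))
      = T.dist a u + B.dist s b := by
    intro a b
    rw [hG₃def, glue_dist_inl_inl G₁ C (Sum.inl v) r hG₁ hC, hG₁def,
      glue_dist_inl_gins T B u s hT hB]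
  have hd13 : ∀ a c, G₃.dist (Sum.inl (Sum.inl a)) (gins (Sum.inl v) r c)
      = T.dist a v + C.dist r c := by
    intro a c
    rw [hG₃def, glue_dist_inl_gins G₁ C (Sum.inl v) r hG₁ hC, hG₁def,
      glue_dist_inl_inl T B u s hT hB]
  have hd22 : ∀ b b', G₃.dist (Sum.inl (gins u s b)) (Sum.inl (gins u s b'))
      = B.dist b b' := by
    intro b b'
    rw [hG₃def, glue_dist_inl_inl G₁ C (Sum.inl v) r hG₁ hC, hG₁def,
      glue_dist_gins T B u s hT hB]
  have hd23 : ∀ b c, G₃.dist (Sum.inl (gins u s b)) (gins (Sum.inl v) r c)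
      = (T.dist v u + B.dist s b) + C.dist r c := by
    intro b c
    rw [hG₃def, glue_dist_inl_gins G₁ C (Sum.inl v) r hG₁ hC,
      SimpleGraph.dist_comm (G := G₁), hG₁def, glue_dist_inl_gins T B u s hT hB]
  have hd33 : ∀ c c', G₃.dist (gins (Sum.inl v) r c) (gins (Sum.inl v) r c')
      = C.dist c c' := by
    intro c c'
    rw [hG₃def, glue_dist_gins G₁ C (Sum.inl v) r hG₁ hC]
  have hd21 : ∀ b a, G₃.dist (Sum.inl (gins u s b)) (Sum.inl (Sum.inl a))
      = T.dist a u + B.dist s b := by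
    intro b a; rw [SimpleGraph.dist_comm]; exact hd12 a b
  have hd31 : ∀ c a, G₃.dist (gins (Sum.inl v) r c) (Sum.inl (Sum.inl a))
      = T.dist a v + C.dist r c := by
    intro c a; rw [SimpleGraph.dist_comm]; exact hd13 a c
  have hd32 : ∀ c b, G₃.dist (gins (Sum.inl v) r c) (Sum.inl (gins u s b))
      = (T.dist v u + B.dist s b) + C.dist r c := by
    intro c b; rw [SimpleGraph.dist_comm]; exact hd23 b c
  simp only [hsplit]
  simp only [hd11, hd12, hd13, hd21, hd22, hd23, hd31, hd32, hd33]
  simp only [Finset.sum_add_distrib, Finset.sum_const, smul_eq_mul, Finset.mul_sum, dplus]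
  simp only [← Finset.sum_mul, ← Finset.mul_sum]
  have hds : ∀ q ∈ pendants B, B.dist s q = B.dist q s := fun q _ => SimpleGraph.dist_comm
  have hdr : ∀ q ∈ pendants C, C.dist r q = C.dist q r := fun q _ => SimpleGraph.dist_comm
  rw [Finset.sum_congr rfl hds, Finset.sum_congr rfl hdr]
  ring


/-- If `d⁺_T(u) = d⁺_T(v)`, swapping which of the fragments `X`, `Y` is glued at `u` and
which at `v` does not change the terminal Wiener index, even if the numbers of pendant
vertices of `X` and `Y` differ. `T₃` glues `X` at `u` (via `s`) and `Y` at `v` (via `r`);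
`T₄` glues `Y` at `u` and `X` at `v`. -/
theorem stmt14 {α β γ : Type*} [Fintype α] [Fintype β] [Fintype γ]
    (T : SimpleGraph α) (X : SimpleGraph β) (Y : SimpleGraph γ)
    (u v : α) (s : β) (r : γ)
    (hT : T.IsTree) (hX : X.IsTree) (hY : Y.IsTree)
    (ha : 3 ≤ Fintype.card α) (hb : 3 ≤ Fintype.card β) (hc : 3 ≤ Fintype.card γ)
    (huv : u ≠ v)
    (hu : T.degree u ≠ 1) (hv : T.degree v ≠ 1)
    (hs : X.degree s ≠ 1) (hr : Y.degree r ≠ 1)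
    (hd : dplus T u = dplus T v) :
    TW (glue (glue T X u s) Y (Sum.inl v) r) =
      TW (glue (glue T Y u r) X (Sum.inl v) s) := by
  have h1 := S_formula T X Y u v s r hT.isConnected hX.isConnected hY.isConnected
    ha hb hc huv hu hv hs hr
  have h2 := S_formula T Y X u v r s hT.isConnected hY.isConnected hX.isConnected
    ha hc hb huv hu hv hr hs
  have hu' : ∑ p ∈ pendants T, T.dist p u = dplus T u :=
    Finset.sum_congr rfl fun p _ => SimpleGraph.dist_comm
  have hv' : ∑ p ∈ pendants T, T.dist p v = dplus T v :=
    Finset.sum_congr rfl fun p _ => SimpleGraph.dist_comm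
  rw [hu', hv', hd] at h1 h2
  rw [TW, TW, h1, h2]
  ring_nf
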